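/- Let L be a flat layout and write squeeze(L) = (s_1,…,s_m):(d_1,…,d_m). Then L is compact if and only if there exists a permutation σ of {1,…,m} such that d_{σ(i)} = s_{σ(1)}⋯s_{σ(i−1)} for all 1 ≤ i ≤ m (i.e., some permutation of squeeze(L) is column-major). -/

import Mathlib

/-- A flat layout, represented as its list of modes `(sᵢ, dᵢ)`:
the first component of each mode is a shape entry, the second a stride entry. -/
abbrev FlatLayout := List (ℕ × ℕ)

namespace FlatLayout

/-- Validity of a flat layout: every shape entry is a positive integer. -/
def Valid (L : FlatLayout) : Prop := ∀ p ∈ L, 0 < p.1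

/-- The size of a flat layout: the product of its shape entries. -/
def size (L : FlatLayout) : ℕ := (L.map Prod.fst).prod

/-- The cosize of a flat layout: `1 + Σ (sᵢ - 1) * dᵢ`. -/
def cosize (L : FlatLayout) : ℕ := 1 + (L.map fun p => (p.1 - 1) * p.2).sum

/-- The rank of a flat layout: its number of modes. -/
def rank (L : FlatLayout) : ℕ := L.length

/-- The layout function `Φ_L`: `Φ_L(x) = Σ xᵢ·dᵢ` where
`xᵢ = ⌊x / (s₁⋯sᵢ₋₁)⌋ mod sᵢ`. -/
def phi : FlatLayout → ℕ → ℕ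
  | [], _ => 0
  | (s, d) :: rest, x => x % s * d + phi rest (x / s)

/-- `squeeze L` deletes every mode whose shape entry equals `1`. -/
def squeeze (L : FlatLayout) : FlatLayout := L.filter fun p => p.1 != 1

/-- `filterZeros L` deletes every mode whose stride entry equals `0`. -/
def filterZeros (L : FlatLayout) : FlatLayout := L.filter fun p => p.2 != 0

/-- The ordering on modes: `(s,d) ⪯ (s',d')` iff `d < d'`, or `d = d'` and `s ≤ s'`. -/
def ModeLE (p q : ℕ × ℕ) : Prop := p.2 < q.2 ∨ (p.2 = q.2 ∧ p.1 ≤ q.1)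

instance : DecidableRel ModeLE := fun p q => by unfold ModeLE; infer_instance

/-- A flat layout is sorted if its consecutive modes are `⪯`-increasing. -/
def Sorted (L : FlatLayout) : Prop := L.Chain' ModeLE

/-- `sortL L` stably sorts the modes of `L` with respect to `⪯`. -/
def sortL (L : FlatLayout) : FlatLayout := L.mergeSort fun p q => decide (ModeLE p q)

/-- A flat layout is coalesced if no shape entry equals `1` and
for consecutive modes, `sᵢ·dᵢ ≠ dᵢ₊₁`. -/
def Coalesced (L : FlatLayout) : Prop :=
  (∀ p ∈ L, p.1 ≠ 1) ∧ L.Chain' fun p q => p.1 * p.2 ≠ q.2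

/-- Combine adjacent modes `(s,d), (s',d')` with `d' = s·d` into `(s·s', d)`, repeatedly. -/
def coalAux : List (ℕ × ℕ) → List (ℕ × ℕ)
  | [] => []
  | p :: rest =>
    match coalAux rest with
    | [] => [p]
    | q :: rest' =>
        if p.1 * p.2 = q.2 then (p.1 * q.1, p.2) :: rest' else p :: q :: rest'

/-- Coalesce of a flat layout: squeeze, then repeatedly combine adjacent modes
`(s,d), (s',d')` with `d' = s·d` into `(s·s', d)`. -/
def coal (L : FlatLayout) : FlatLayout := coalAux (squeeze L)

/-- Compactness: the layout function takes values in `{0, …, cosize L - 1}` and induces a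
bijection `{0, …, size L - 1} → {0, …, cosize L - 1}`. -/
def Compact (L : FlatLayout) : Prop :=
  Set.BijOn (phi L) {x | x < size L} {y | y < cosize L}

/-- `B` is a complement of `A` (written `A ⊥ B`) if the concatenation `A ⋆ B` is compact. -/
def Perp (A B : FlatLayout) : Prop := Compact (A ++ B)

/-- `A` is complementable if, writing `sort(squeeze A) = (s₁,…,sₘ):(d₁,…,dₘ)`,
`sᵢ·dᵢ` divides `dᵢ₊₁` for all `1 ≤ i < m`. -/
def Complementable (A : FlatLayout) : Prop :=
  (sortL (squeeze A)).Chain' fun p q => p.1 * p.2 ∣ q.2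

/-- `B` is an `N`-complement of `A` if `B` is a complement of `A`
and `size A * size B = N`. -/
def IsNComplement (A B : FlatLayout) (N : ℕ) : Prop :=
  Perp A B ∧ size A * size B = N

/-- `A` is `N`-complementable if, writing `sort(squeeze A) = (s₁,…,sₘ):(d₁,…,dₘ)`,
`sᵢ·dᵢ ∣ dᵢ₊₁` for all `1 ≤ i < m`, and `sₘ·dₘ ∣ N`. -/
def NComplementable (A : FlatLayout) (N : ℕ) : Prop :=
  ((sortL (squeeze A)).Chain' fun p q => p.1 * p.2 ∣ q.2) ∧
  ∀ p, (sortL (squeeze A)).getLast? = some p → p.1 * p.2 ∣ N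

/-- Given `l = [(s₁,d₁),…,(sₘ,dₘ)]`, the layout
`C = (d₁, d₂/(s₁d₁), …, dₘ/(sₘ₋₁dₘ₋₁)) : (1, s₁d₁, …, sₘ₋₁dₘ₋₁)`. -/
def compModes (l : List (ℕ × ℕ)) : List (ℕ × ℕ) :=
  match l with
  | [] => []
  | (_, d₁) :: t =>
      (d₁, 1) :: (l.zip t).map fun pq => (pq.2.2 / (pq.1.1 * pq.1.2), pq.1.1 * pq.1.2)

/-- The complement `comp A = coal C` of a complementable flat layout `A`. -/
def comp (A : FlatLayout) : FlatLayout := coal (compModes (sortL (squeeze A)))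

/-- Given `l = [(s₁,d₁),…,(sₘ,dₘ)]` and `N`, the layout
`C = (d₁, d₂/(s₁d₁), …, dₘ/(sₘ₋₁dₘ₋₁), N/(sₘdₘ)) : (1, s₁d₁, …, sₘ₋₁dₘ₋₁, sₘdₘ)`. -/
def compNModes (l : List (ℕ × ℕ)) (N : ℕ) : List (ℕ × ℕ) :=
  match l.getLast? with
  | none => [(N, 1)]
  | some (sm, dm) => compModes l ++ [(N / (sm * dm), sm * dm)]

/-- The `N`-complement `comp(A, N) = coal C` of an `N`-complementable flat layout `A`. -/
def compN (A : FlatLayout) (N : ℕ) : FlatLayout :=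
  coal (compNModes (sortL (squeeze A)) N)

/-- `L` is tractable if, writing `sort L = (s₁,…,sₘ):(d₁,…,dₘ)`, for every `1 ≤ i < m`
either `dᵢ = 0` or `sᵢ·dᵢ` divides `dᵢ₊₁`. -/
def Tractable (L : FlatLayout) : Prop :=
  (sortL L).Chain' fun p q => p.2 = 0 ∨ p.1 * p.2 ∣ q.2

end FlatLayout


/-!
Column-major layouts are compact: their layout function is the identity on `[0, size)`. Since
compactness only depends on the multiset of values of `Φ_L`, it is invariant under permuting the
modes, which gives one direction.

Conversely, let `L` be compact with all shapes `≥ 2`. Then `1` is a value of `Φ_L`, so some mode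
is `(s, 1)`; move it to the front. The values of `Φ_L` are then exactly the sums `r + Φ_T(y)`
with `r < s`, i.e. the blocks `Φ_T(y) + [0, s)` tile `[0, cosize)`, which forces every value of
`Φ_T`, and in particular every stride of `T`, to be a multiple of `s`. Dividing the strides of
`T` by `s` gives a compact layout of smaller rank, and induction produces a column-major
reordering.
-/

theorem Fin.prod_Iio_succ {M : Type*} [CommMonoid M] {n : ℕ} (f : Fin (n + 1) → M) (i : Fin n) :
    ∏ j ∈ Finset.Iio i.succ, f j = f 0 * ∏ j ∈ Finset.Iio i, f j.succ := by
  have : Finset.Iio i.succ = Finset.cons 0 ((Finset.Iio i).map (Fin.succEmb n)) (by simp) := by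
    ext j
    cases j using Fin.cases <;> simp
  rw [this, Finset.prod_cons, Finset.prod_map]
  rfl

theorem Multiset.map_range_mul {α : Type*} (s N : ℕ) (f : ℕ → α) :
    (Multiset.range (s * N)).map f =
      (Multiset.range s).bind fun r => (Multiset.range N).map fun y => f (r + s * y) := by
  rcases Nat.eq_zero_or_pos s with rfl | hs
  · simp
  have : (Multiset.range s).bind (fun r => (Multiset.range N).map fun y => f (r + s * y)) =
      (Multiset.range s ×ˢ Multiset.range N).map fun p => f (p.1 + s * p.2) := by
    simp [SProd.sprod, Multiset.product, Multiset.map_bind]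
  rw [this]
  refine Multiset.map_eq_map_of_bij_of_nodup _ _ (Multiset.nodup_range _)
    ((Multiset.nodup_range _).product (Multiset.nodup_range _)) (fun x _ => (x % s, x / s))
    ?_ ?_ ?_ ?_
  · intro x hx
    simp only [Multiset.mem_product, Multiset.mem_range] at hx ⊢
    exact ⟨Nat.mod_lt _ hs, Nat.div_lt_of_lt_mul hx⟩
  · intro x _ y _ h
    simp only [Prod.mk.injEq] at h
    rw [← Nat.mod_add_div x s, ← Nat.mod_add_div y s, h.1, h.2]
  · rintro ⟨r, y⟩ h
    simp only [Multiset.mem_product, Multiset.mem_range] at h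
    refine ⟨r + s * y, Multiset.mem_range.2 ?_, ?_⟩
    · nlinarith
    · simp [Nat.add_mul_div_left _ _ hs, Nat.mod_eq_of_lt h.1, Nat.div_eq_of_lt h.1]
  · intro x _
    simp [Nat.mod_add_div]

theorem List.Nodup.exists_perm_ofFn_get_eq {α : Type*} [DecidableEq α] {l l' : List α}
    (hl : l.Nodup) (h : l'.Perm l) : ∃ σ : Equiv.Perm (Fin l.length), List.ofFn (fun i => l.get (σ i)) = l' := by
  have hlen : l'.length = l.length := h.length_eq
  let f : Fin l.length → Fin l.length := fun i =>
    (hl.getEquiv l).symm ⟨l'.get (i.cast hlen.symm), h.subset (List.get_mem _ _)⟩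
  have hf : ∀ i, l.get (f i) = l'.get (i.cast hlen.symm) := fun i => by
    rw [← List.Nodup.getEquiv_apply_coe l hl, Equiv.apply_symm_apply]
  have hinj : Function.Injective f := fun i j hij =>
    Fin.cast_injective _ <| (h.nodup_iff.2 hl).get_inj_iff.1 (by rw [← hf, ← hf, hij])
  refine ⟨Equiv.ofBijective f (Finite.injective_iff_bijective.1 hinj), ?_⟩
  refine List.ext_get (by simp [hlen]) fun n hn _ => ?_
  simpa using hf ⟨n, by simpa using hn⟩

lemma dvd_of_bijOn_mod_add {s N C : ℕ} {g : ℕ → ℕ} (hs : 0 < s)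
    (h : Set.BijOn (fun x => x % s + g (x / s)) {x | x < s * N} {y | y < C}) {y : ℕ}
    (hy : y < N) : s ∣ g y := by
  suffices ∀ m, ∀ y < N, g y = m → s ∣ m from this _ y hy rfl
  intro m
  induction m using Nat.strong_induction_on with
  | _ m ih =>
  rintro y hy rfl
  by_contra hndvd
  have hmod : g y % s ≠ 0 := mt Nat.dvd_of_mod_eq_zero hndvd
  have hdecomp := Nat.mod_add_div (g y) s
  have hsy : s * y < s * N := Nat.mul_lt_mul_of_pos_left hy hs
  have hgy : g y < C := by simpa [Nat.mul_div_cancel_left _ hs] using h.mapsTo hsy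
  -- By induction, the block covering `s * (g y / s)` starts at a multiple of `s`, hence at
  -- `s * (g y / s)` itself; but then it also covers `g y`, which lies in the block of `y`.
  obtain ⟨x, hx, hxa⟩ := h.surjOn (show s * (g y / s) < C by omega)
  simp only at hxa
  have hdvd : s ∣ g (x / s) := ih _ (by omega) _ (Nat.div_lt_of_lt_mul hx) rfl
  have hx0 : x % s = 0 := Nat.eq_zero_of_dvd_of_lt
    ((Nat.dvd_add_left hdvd).1 (hxa ▸ Nat.dvd_mul_right s _)) (Nat.mod_lt x hs)
  have hlt : g y % s + s * (x / s) < s * N := by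
    have := Nat.mod_lt (g y) hs
    have := Nat.div_lt_of_lt_mul hx
    nlinarith
  have heq := h.injOn (show g y % s + s * (x / s) ∈ {x | x < s * N} from hlt) hsy (by
    simp only [Nat.add_mul_mod_self_left, Nat.mod_mod, Nat.add_mul_div_left _ _ hs,
      Nat.div_eq_of_lt (Nat.mod_lt _ hs), Nat.mul_mod_right, Nat.mul_div_cancel_left _ hs,
      zero_add]
    omega)
  exact hmod (by simpa using congrArg (· % s) heq)

lemma bijOn_of_bijOn_mod_add_mul {s N C : ℕ} {g : ℕ → ℕ} (hs : 0 < s)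
    (h : Set.BijOn (fun x => x % s + s * g (x / s)) {x | x < s * N} {y | y < s * C}) :
    Set.BijOn g {y | y < N} {z | z < C} := by
  have hmul : ∀ y, y < N → s * y < s * N := fun y hy => Nat.mul_lt_mul_of_pos_left hy hs
  refine ⟨fun y hy => ?_, fun y hy y' hy' hyy' => ?_, fun z hz => ?_⟩
  · have := h.mapsTo (hmul y hy)
    simp only [Set.mem_ofPred_eq, Nat.mul_mod_right, Nat.mul_div_cancel_left _ hs, zero_add] at this
    exact lt_of_mul_lt_mul_left this (Nat.zero_le s)
  · have := h.injOn (hmul y hy) (hmul y' hy') (by simp [Nat.mul_div_cancel_left _ hs, hyy'])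
    exact Nat.eq_of_mul_eq_mul_left hs this
  · obtain ⟨x, hx, hxz⟩ := h.surjOn (show s * z < s * C from Nat.mul_lt_mul_of_pos_left hz hs)
    simp only at hxz
    have hx0 : x % s = 0 := Nat.eq_zero_of_dvd_of_lt
      ((Nat.dvd_add_left (Nat.dvd_mul_right s _)).1 (hxz ▸ Nat.dvd_mul_right s z))
      (Nat.mod_lt x hs)
    refine ⟨x / s, Nat.div_lt_of_lt_mul hx, ?_⟩
    rw [hx0, zero_add] at hxz
    exact Nat.eq_of_mul_eq_mul_left hs hxz

namespace FlatLayout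

@[simp] lemma phi_nil (x : ℕ) : phi [] x = 0 := rfl

@[simp] lemma phi_cons (p : ℕ × ℕ) (t : FlatLayout) (x : ℕ) :
    phi (p :: t) x = x % p.1 * p.2 + phi t (x / p.1) := rfl

@[simp] lemma size_nil : size [] = 1 := rfl

@[simp] lemma size_cons (p : ℕ × ℕ) (t : FlatLayout) : size (p :: t) = p.1 * size t := by
  simp [size]

lemma cosize_cons (p : ℕ × ℕ) (t : FlatLayout) :
    cosize (p :: t) = (p.1 - 1) * p.2 + cosize t := by
  simp only [cosize, List.map_cons, List.sum_cons]
  ring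

lemma size_pos {L : FlatLayout} (hL : Valid L) : 0 < size L :=
  List.prod_pos fun _ ha => by
    obtain ⟨p, hp, rfl⟩ := List.mem_map.1 ha
    exact hL p hp

lemma phi_zero (L : FlatLayout) : phi L 0 = 0 := by
  induction L with
  | nil => rfl
  | cons p t ih => simp [ih]

lemma phi_squeeze (L : FlatLayout) (x : ℕ) : phi (squeeze L) x = phi L x := by
  induction L generalizing x with
  | nil => rfl
  | cons p t ih => by_cases h : p.1 = 1 <;> simp [squeeze, h, ← ih, Nat.mod_one]

lemma size_squeeze (L : FlatLayout) : size (squeeze L) = size L := by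
  induction L with
  | nil => rfl
  | cons p t ih => by_cases h : p.1 = 1 <;> simp_all [squeeze]

lemma cosize_squeeze (L : FlatLayout) : cosize (squeeze L) = cosize L := by
  induction L with
  | nil => rfl
  | cons p t ih =>
    by_cases h : p.1 = 1 <;> simp_all [squeeze, cosize_cons]

lemma compact_squeeze_iff (L : FlatLayout) : Compact (squeeze L) ↔ Compact L := by
  rw [Compact, Compact, size_squeeze, cosize_squeeze, funext (phi_squeeze L)]

lemma one_lt_of_mem_squeeze {L : FlatLayout} (hL : Valid L) : ∀ p ∈ squeeze L, 1 < p.1 := by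
  intro p hp
  have := List.of_mem_filter hp
  have := hL p (List.mem_of_mem_filter hp)
  simp_all only [bne_iff_ne]
  omega

def values (L : FlatLayout) : Multiset ℕ := (Multiset.range (size L)).map (phi L)

lemma values_cons (p : ℕ × ℕ) (t : FlatLayout) :
    values (p :: t) = (Multiset.range p.1).bind fun r => (values t).map (r * p.2 + ·) := by
  rw [values, size_cons, Multiset.map_range_mul]
  refine Multiset.bind_congr fun r hr => ?_
  have hr : r < p.1 := Multiset.mem_range.1 hr
  rw [values, Multiset.map_map]
  refine Multiset.map_congr rfl fun y _ => ?_
  simp [Nat.add_mul_div_left _ _ (by omega : 0 < p.1), Nat.mod_eq_of_lt hr, Nat.div_eq_of_lt hr]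

lemma values_perm {L L' : FlatLayout} (h : L.Perm L') : values L = values L' := by
  induction h with
  | nil => rfl
  | cons p _ ih => rw [values_cons, values_cons, ih]
  | swap p q t =>
    simp only [values_cons, Multiset.map_bind, Multiset.map_map]
    rw [Multiset.bind_bind]
    refine Multiset.bind_congr fun _ _ => Multiset.bind_congr fun _ _ =>
      Multiset.map_congr rfl fun _ _ => ?_
    simp only [Function.comp_apply]
    ring
  | trans _ _ ih₁ ih₂ => rw [ih₁, ih₂]

lemma cosize_perm {L L' : FlatLayout} (h : L.Perm L') : cosize L = cosize L' := by
  rw [cosize, cosize, (h.map _).sum_eq]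

lemma compact_iff_values_eq_range (L : FlatLayout) :
    Compact L ↔ values L = Multiset.range (cosize L) := by
  have hmem : ∀ y, y ∈ values L ↔ ∃ x < size L, phi L x = y := by simp [values]
  constructor
  · rintro ⟨hmaps, hinj, hsurj⟩
    have hnodup : (values L).Nodup :=
      (Multiset.nodup_range _).map_on fun x hx y hy =>
        hinj (Multiset.mem_range.1 hx) (Multiset.mem_range.1 hy)
    refine (hnodup.ext (Multiset.nodup_range _)).2 fun y => ?_
    rw [hmem, Multiset.mem_range]
    exact ⟨fun ⟨x, hx, hxy⟩ => hxy ▸ hmaps hx, fun hy => hsurj hy⟩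
  · intro h
    have hnodup : (values L).Nodup := h ▸ Multiset.nodup_range _
    refine ⟨fun x hx => ?_, fun x hx y hy => ?_, fun y hy => ?_⟩
    · simpa [← Multiset.mem_range, ← h] using (hmem _).2 ⟨x, hx, rfl⟩
    · exact Multiset.inj_on_of_nodup_map hnodup x (Multiset.mem_range.2 hx) y
        (Multiset.mem_range.2 hy)
    · exact (hmem y).1 (h ▸ Multiset.mem_range.2 hy)

lemma Compact.perm {L L' : FlatLayout} (hc : Compact L) (h : L.Perm L') : Compact L' := by
  rw [compact_iff_values_eq_range] at hc ⊢
  rwa [← values_perm h, ← cosize_perm h]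

/-- The strides of `L` are `c, c·s₁, c·s₁s₂, …`; column-major means `IsColMajor 1`. -/
def IsColMajor : ℕ → FlatLayout → Prop
  | _, [] => True
  | c, p :: t => p.2 = c ∧ IsColMajor (c * p.1) t

lemma isColMajor_ofFn_iff {n : ℕ} (v : Fin n → ℕ × ℕ) (c : ℕ) :
    IsColMajor c (List.ofFn v) ↔ ∀ i, (v i).2 = c * ∏ j ∈ Finset.Iio i, (v j).1 := by
  induction n generalizing c with
  | zero => simp [IsColMajor]
  | succ n ih =>
    rw [List.ofFn_succ, IsColMajor, ih, Fin.forall_fin_succ]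
    simp [Fin.prod_Iio_succ, mul_assoc, ← bot_eq_zero]

lemma phi_of_isColMajor {c : ℕ} {L : FlatLayout} (h : IsColMajor c L) (x : ℕ) :
    phi L x = c * (x % size L) := by
  induction L generalizing c x with
  | nil => simp [Nat.mod_one]
  | cons p t ih =>
    obtain ⟨rfl, ht⟩ := h
    rw [phi_cons, ih ht, size_cons, Nat.mod_mul]
    ring

lemma cosize_of_isColMajor {c : ℕ} {L : FlatLayout} (h : IsColMajor c L) (hL : Valid L) :
    c + cosize L = 1 + c * size L := by
  induction L generalizing c with
  | nil => simp [cosize, add_comm]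
  | cons p t ih =>
    obtain ⟨rfl, ht⟩ := h
    have hp : 0 < p.1 := hL p (by simp)
    have := ih ht fun q hq => hL q (by simp [hq])
    rw [cosize_cons, size_cons]
    obtain ⟨k, hk⟩ : ∃ k, p.1 = k + 1 := ⟨p.1 - 1, by omega⟩
    rw [hk] at this ⊢
    simp only [Nat.add_sub_cancel]
    linarith

lemma compact_of_isColMajor {L : FlatLayout} (h : IsColMajor 1 L) (hL : Valid L) : Compact L := by
  have hcosize : cosize L = size L := by have := cosize_of_isColMajor h hL; omega
  rw [Compact, hcosize]
  refine (Set.bijOn_id _).congr fun x hx => ?_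
  rw [phi_of_isColMajor h, one_mul, Nat.mod_eq_of_lt hx, id]

lemma IsColMajor.map_mul_stride {c k : ℕ} {L : FlatLayout} (h : IsColMajor c L) :
    IsColMajor (k * c) (L.map fun p => (p.1, k * p.2)) := by
  induction L generalizing c with
  | nil => trivial
  | cons p t ih =>
    obtain ⟨rfl, ht⟩ := h
    exact ⟨rfl, by simpa [mul_assoc] using ih ht⟩

lemma IsColMajor.nodup {c : ℕ} {L : FlatLayout} (h : IsColMajor c L) (hc : 0 < c)
    (hL : ∀ p ∈ L, 1 < p.1) : L.Nodup := by
  suffices (L.map Prod.snd).IsChain (· < ·) from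
    (List.isChain_iff_pairwise.1 this).nodup.of_map _
  induction L generalizing c with
  | nil => simp
  | cons p t ih =>
    obtain ⟨rfl, ht⟩ := h
    have hp := hL p (by simp)
    have htail := ih ht (by positivity) fun q hq => hL q (by simp [hq])
    cases t with
    | nil => simp
    | cons q t =>
      refine List.IsChain.cons_cons ?_ htail
      rw [ht.1]
      exact lt_mul_of_one_lt_right hc hp

lemma exists_lt_size_phi_eq_stride {L : FlatLayout} (hL : ∀ p ∈ L, 1 < p.1) :
    ∀ p ∈ L, ∃ x < size L, phi L x = p.2 := by
  induction L with
  | nil => simp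
  | cons p t ih =>
    have hp := hL p (by simp)
    have ht : ∀ q ∈ t, 1 < q.1 := fun q hq => hL q (by simp [hq])
    have hsize : 0 < size t := size_pos fun q hq => (ht q hq).le
    rintro q (_ | ⟨_, hq⟩)
    · refine ⟨1, ?_, ?_⟩
      · simpa using one_lt_mul_of_lt_of_le hp hsize
      · simp [Nat.mod_eq_of_lt hp, Nat.div_eq_of_lt hp, phi_zero]
    · obtain ⟨y, hy, hphi⟩ := ih ht q hq
      refine ⟨p.1 * y, ?_, ?_⟩
      · simpa using Nat.mul_lt_mul_of_pos_left hy (by omega : 0 < p.1)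
      · simp [Nat.mul_div_cancel_left _ (by omega : 0 < p.1), hphi]

lemma exists_stride_eq_one_of_phi_eq_one {L : FlatLayout} {x : ℕ} (h : phi L x = 1) :
    ∃ p ∈ L, p.2 = 1 := by
  induction L generalizing x with
  | nil => simp at h
  | cons p t ih =>
    rw [phi_cons] at h
    rcases Nat.add_eq_one_iff.1 h with ⟨-, h⟩ | ⟨h, -⟩
    · obtain ⟨q, hq, hq1⟩ := ih h
      exact ⟨q, by simp [hq], hq1⟩
    · exact ⟨p, by simp, Nat.eq_one_of_mul_eq_one_left h⟩

lemma Compact.exists_stride_eq_one {L : FlatLayout} (hc : Compact L) (hL : 1 < size L) :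
    ∃ p ∈ L, p.2 = 1 := by
  have h0 : (0 : ℕ) ∈ {x | x < size L} := by simp only [Set.mem_ofPred_eq]; omega
  have h1 : (1 : ℕ) ∈ {x | x < size L} := hL
  have hphi1 : phi L 1 ≠ 0 := fun h => one_ne_zero (hc.injOn h1 h0 (by rw [h, phi_zero]))
  have hcosize : 1 < cosize L := lt_of_lt_of_le' (hc.mapsTo h1) (Nat.one_le_iff_ne_zero.2 hphi1)
  obtain ⟨x, -, hx⟩ := hc.surjOn hcosize
  exact exists_stride_eq_one_of_phi_eq_one hx

lemma phi_map_mul_stride (k : ℕ) (L : FlatLayout) (x : ℕ) :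
    phi (L.map fun p => (p.1, k * p.2)) x = k * phi L x := by
  induction L generalizing x with
  | nil => rfl
  | cons p t ih => simp only [List.map_cons, phi_cons, ih]; ring

lemma size_map_mul_stride (k : ℕ) (L : FlatLayout) :
    size (L.map fun p => (p.1, k * p.2)) = size L := by
  simp [size, Function.comp_def]

lemma cosize_map_mul_stride (k : ℕ) (L : FlatLayout) :
    cosize (L.map fun p => (p.1, k * p.2)) + k = 1 + k * cosize L := by
  induction L with
  | nil => simp [cosize, add_comm]
  | cons p t ih =>
    simp only [List.map_cons, cosize_cons]
    linarith

lemma exists_map_mul_stride_eq {k : ℕ} {L : FlatLayout} (h : ∀ p ∈ L, k ∣ p.2) :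
    ∃ L' : FlatLayout, L'.map (fun p => (p.1, k * p.2)) = L := by
  refine ⟨L.map fun p => (p.1, p.2 / k), ?_⟩
  rw [List.map_map]
  conv_rhs => rw [← List.map_id L]
  exact List.map_congr_left fun p hp => by simp [Nat.mul_div_cancel' (h p hp)]

lemma dvd_stride_of_compact_cons {s : ℕ} {T : FlatLayout} (hs : 0 < s) (hT : ∀ p ∈ T, 1 < p.1)
    (hc : Compact ((s, 1) :: T)) : ∀ p ∈ T, s ∣ p.2 := by
  intro p hp
  obtain ⟨y, hy, hphiy⟩ := exists_lt_size_phi_eq_stride hT p hp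
  rw [← hphiy]
  have hphi : phi ((s, 1) :: T) = fun x => x % s + phi T (x / s) := by funext x; simp
  rw [Compact, hphi, size_cons] at hc
  exact dvd_of_bijOn_mod_add hs hc hy

lemma compact_of_compact_cons_map_mul_stride {s : ℕ} {T : FlatLayout} (hs : 0 < s)
    (hc : Compact ((s, 1) :: T.map fun p => (p.1, s * p.2))) : Compact T := by
  have hphi :
      phi ((s, 1) :: T.map fun p => (p.1, s * p.2)) = fun x => x % s + s * phi T (x / s) := by
    funext x; simp [phi_map_mul_stride]
  have hcosize : cosize ((s, 1) :: T.map fun p => (p.1, s * p.2)) = s * cosize T := by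
    have := cosize_map_mul_stride s T
    rw [cosize_cons]
    simp only [mul_one]
    omega
  rw [Compact, hphi, size_cons, size_map_mul_stride, hcosize] at hc
  exact bijOn_of_bijOn_mod_add_mul hs hc

theorem Compact.exists_perm_isColMajor {L : FlatLayout} (hc : Compact L)
    (hL : ∀ p ∈ L, 1 < p.1) :
    ∃ L' : FlatLayout, L'.Perm L ∧ IsColMajor 1 L' := by
  obtain ⟨n, hn⟩ : ∃ n, L.length = n := ⟨_, rfl⟩
  induction n using Nat.strong_induction_on generalizing L with
  | _ n ih =>
  rcases L with _ | ⟨p, t⟩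
  · exact ⟨[], List.Perm.refl _, trivial⟩
  have hsize : 1 < size (p :: t) := by
    rw [size_cons]
    exact one_lt_mul_of_lt_of_le (hL p (by simp))
      (size_pos fun q hq => (hL q (by simp [hq])).le)
  obtain ⟨⟨s, d⟩, hmem, hd⟩ := hc.exists_stride_eq_one hsize
  obtain rfl : d = 1 := hd
  obtain ⟨T, hperm⟩ : ∃ T, ((s, 1) :: T).Perm (p :: t) :=
    ⟨_, (List.perm_cons_erase hmem).symm⟩
  have hs : 1 < s := hL _ hmem
  have hT : ∀ q ∈ T, 1 < q.1 := fun q hq => hL q (hperm.subset (by simp [hq]))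
  have hcT : Compact ((s, 1) :: T) := hc.perm hperm.symm
  obtain ⟨T', rfl⟩ := exists_map_mul_stride_eq (dvd_stride_of_compact_cons (by omega) hT hcT)
  have hlen : T'.length < n := by
    have := hperm.length_eq
    simp only [List.length_cons, List.length_map] at this hn
    omega
  obtain ⟨C, hC, hcm⟩ := ih _ hlen (compact_of_compact_cons_map_mul_stride (by omega) hcT)
    (fun q hq => hT (q.1, s * q.2) (List.mem_map_of_mem hq)) rfl
  refine ⟨(s, 1) :: C.map fun q => (q.1, s * q.2), ((hC.map _).cons _).trans hperm, rfl, ?_⟩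
  simpa using hcm.map_mul_stride (k := s)

end FlatLayout

open FlatLayout in
theorem compact_iff_perm_colMajor (L : FlatLayout) (hL : L.Valid) :
    Compact L ↔
      ∃ σ : Equiv.Perm (Fin (squeeze L).length),
        ∀ i : Fin (squeeze L).length,
          ((squeeze L).get (σ i)).2 = ∏ j ∈ Finset.Iio i, ((squeeze L).get (σ j)).1 := by
  have hS : ∀ p ∈ squeeze L, 1 < p.1 := one_lt_of_mem_squeeze hL
  rw [← compact_squeeze_iff]
  constructor
  · intro hc
    obtain ⟨L', hperm, hcm⟩ := hc.exists_perm_isColMajor hS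
    have hnodup : L'.Nodup := hcm.nodup one_pos fun p hp => hS p (hperm.subset hp)
    obtain ⟨σ, rfl⟩ := (hperm.nodup_iff.1 hnodup).exists_perm_ofFn_get_eq hperm
    exact ⟨σ, by simpa using (isColMajor_ofFn_iff _ 1).1 hcm⟩
  · rintro ⟨σ, hσ⟩
    have hcm := (isColMajor_ofFn_iff (fun i => (squeeze L).get (σ i)) 1).2 (by simpa using hσ)
    have hperm : (List.ofFn fun i => (squeeze L).get (σ i)).Perm (squeeze L) := by
      have := σ.ofFn_comp_perm (squeeze L).get
      rwa [List.ofFn_get] at this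
    exact (compact_of_isColMajor hcm fun p hp => (hS p (hperm.subset hp)).le).perm hperm
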